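/- Let G = (V,E) be an undirected graph with n vertices, and let G' be the bipartite DAG built from G as follows: for each vertex v_i of G create a gadget g_i with n sources s_{i1},...,s_{in} and one target t_i with edges s_{ij} → t_i; whenever (v_i,v_j) ∈ E, merge s_{ij} and s_{ji} into one source with edges to both t_i and t_j. Then in the (2,1)-I/O model with partial computations, two gadgets g_i and g_j can both be fully eliminated (all their edges deleted and both results stored) with a total of 2n + 3 unit-cost moves if and only if (v_i, v_j) ∈ E; otherwise at least 2n + 4 moves are required. -/

import Mathlib

/-! The Red-Blue Pebble Game with partial computations, in the `(M,1)`-I/O model.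
A pebble on a vertex means the corresponding word is in the cache; a blue pebble is a
"dirty" partial result that must be stored (cost 1) before it can leave the cache. -/

inductive Pebble : Type
  | red
  | blue
deriving DecidableEq

/-- A configuration: the remaining (not yet computed) edges of the DAG, and the pebble
(if any) on each vertex. -/
structure Config (V : Type) where
  edges : Finset (V × V)
  peb : V → Option Pebble

variable {V : Type} [DecidableEq V] [Fintype V]

/-- The number of pebbles currently on the graph. -/
def pebCount (c : Config V) : ℕ :=
  (Finset.univ.filter fun v => (c.peb v).isSome).card

/-- One move of the game with at most `M` pebbles, together with its cost:
(R1) place a red pebble on an empty vertex, cost 1 (LOAD);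
(R2) remove a red pebble, cost 0 (REMOVE), or change red to blue, cost 0;
(R3) change a blue pebble to red, cost 1 (STORE);
(R4) if `u` is a leaf and both `u` and `v` are pebbled, delete the edge `(u,v)` for free,
     and the pebble on `v` becomes blue (partial COMPUTE);
(R5) at most `M` pebbles are on the graph at any time. -/
inductive Step (M : ℕ) : Config V → Config V → ℕ → Prop
  | load (c : Config V) (v : V) (h : c.peb v = none) (hM : pebCount c < M) :
      Step M c ⟨c.edges, Function.update c.peb v (some Pebble.red)⟩ 1
  | remove (c : Config V) (v : V) (h : c.peb v = some Pebble.red) :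
      Step M c ⟨c.edges, Function.update c.peb v none⟩ 0
  | toBlue (c : Config V) (v : V) (h : c.peb v = some Pebble.red) :
      Step M c ⟨c.edges, Function.update c.peb v (some Pebble.blue)⟩ 0
  | store (c : Config V) (v : V) (h : c.peb v = some Pebble.blue) :
      Step M c ⟨c.edges, Function.update c.peb v (some Pebble.red)⟩ 1
  | compute (c : Config V) (u v : V) (he : (u, v) ∈ c.edges)
      (hleaf : ∀ x, (x, u) ∉ c.edges)
      (hu : (c.peb u).isSome) (hv : (c.peb v).isSome) :
      Step M c ⟨c.edges.erase (u, v), Function.update c.peb v (some Pebble.blue)⟩ 0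

/-- `Reach M c c' k`: configuration `c'` is reachable from `c` by a pebbling strategy of
total cost `k`. -/
inductive Reach (M : ℕ) : Config V → Config V → ℕ → Prop
  | refl (c : Config V) : Reach M c c 0
  | tail {a b c : Config V} {k1 k2 : ℕ} :
      Reach M a b k1 → Step M b c k2 → Reach M a c (k1 + k2)

/-- The set of costs of pebbling strategies that, starting from the DAG with edge set `E`
and an empty cache, delete all edges and store all results (no dirty blue pebble
remains). -/
def Achievable (M : ℕ) (E : Finset (V × V)) : Set ℕ :=
  {k | ∃ c' : Config V, Reach M ⟨E, fun _ => none⟩ c' k ∧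
    c'.edges = ∅ ∧ ∀ v, c'.peb v ≠ some Pebble.blue}

/-- The source vertex `s_{ij}` of gadget `g_i`, as an index: when `v_i` and `v_j` are
adjacent in `G`, the sources `s_{ij}` and `s_{ji}` are merged into the single canonical
(sorted) pair; otherwise `s_{ij}` is the private source `(i, j)`. -/
def src {n : ℕ} (G : SimpleGraph (Fin n)) [DecidableRel G.Adj] (i j : Fin n) :
    Fin n × Fin n :=
  if G.Adj i j ∧ j < i then (j, i) else (i, j)

/-- The edge set of the bipartite DAG `G'` built from `G`: vertices are the targets `t_i`
(`Sum.inl i`) and the sources (`Sum.inr` of an index pair); for every `i` and `j` there is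
an edge from the source `s_{ij}` to the target `t_i`. -/
def gadgetEdges {n : ℕ} (G : SimpleGraph (Fin n)) [DecidableRel G.Adj] :
    Finset ((Fin n ⊕ Fin n × Fin n) × (Fin n ⊕ Fin n × Fin n)) :=
  Finset.univ.image fun p : Fin n × Fin n => (Sum.inr (src G p.1 p.2), Sum.inl p.1)

/-- The edges of the two gadgets `g_i` and `g_j` only: all edges of the gadget graph
entering the targets `t_i` or `t_j`. -/
def twoGadgetEdges {n : ℕ} (G : SimpleGraph (Fin n)) [DecidableRel G.Adj] (i j : Fin n) :
    Finset ((Fin n ⊕ Fin n × Fin n) × (Fin n ⊕ Fin n × Fin n)) :=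
  (Finset.univ.filter fun p : Fin n × Fin n => p.1 = i ∨ p.1 = j).image
    fun p => (Sum.inr (src G p.1 p.2), Sum.inl p.1)


/-! Charge every vertex the moves it still certainly needs (`pebbleDebt`): a load if it is
uncached and has pending edges, and a store if it is a target with pending in-edges or carries
a blue pebble. When no vertex is both a source and a target, no move lowers the total by more
than its cost, so eliminating everything costs at least `#sources + 2 * #targets`. Two gadgets
sharing no source thus need `2n + 4` moves. Adjacent gadgets share a source `s`, and `2n + 3`
moves suffice: eliminate `g_i` taking `s` last and keep `s` cached, so that it costs nothing
as the first source of `g_j`. -/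

namespace Reach

variable {M : ℕ}

theorem single {a b : Config V} {k : ℕ} (s : Step M a b k) : Reach M a b k := by
  simpa using Reach.tail (Reach.refl a) s

theorem trans {a b c : Config V} {k l : ℕ} (h₁ : Reach M a b k) (h₂ : Reach M b c l) :
    Reach M a c (k + l) := by
  induction h₂ with
  | refl => exact h₁
  | tail _ s ih => exact Nat.add_assoc .. ▸ ih.tail s

theorem congr {a b b' : Config V} {k k' : ℕ} (h : Reach M a b k) (hb : b = b') (hk : k = k') :
    Reach M a b' k' :=
  hb ▸ hk ▸ h

end Reach

theorem Step.edges_subset {M : ℕ} {a b : Config V} {k : ℕ} (s : Step M a b k) :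
    b.edges ⊆ a.edges := by
  cases s <;> simp [Finset.erase_subset]

theorem Reach.edges_subset {M : ℕ} {a b : Config V} {k : ℕ} (r : Reach M a b k) :
    b.edges ⊆ a.edges := by
  induction r with
  | refl => exact subset_rfl
  | tail _ s ih => exact s.edges_subset.trans ih

/-- `out` / `inc`: the vertex still has an outgoing / incoming edge. -/
def pebbleDebt (out inc : Bool) : Option Pebble → ℕ
  | none => (if out then 1 else 0) + (if inc then 2 else 0)
  | some Pebble.red => if inc then 1 else 0
  | some Pebble.blue => 1

def potential (c : Config V) : ℕ :=
  ∑ v, pebbleDebt (v ∈ c.edges.image Prod.fst) (v ∈ c.edges.image Prod.snd) (c.peb v)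

theorem potential_le_of_forall_le {b c : Config V} (v : V) (k : ℕ)
    (h : ∀ w, pebbleDebt (w ∈ b.edges.image Prod.fst) (w ∈ b.edges.image Prod.snd) (b.peb w) ≤
      pebbleDebt (w ∈ c.edges.image Prod.fst) (w ∈ c.edges.image Prod.snd) (c.peb w) +
        if w = v then k else 0) :
    potential b ≤ potential c + k := by
  calc potential b ≤ ∑ w, (pebbleDebt (w ∈ c.edges.image Prod.fst)
          (w ∈ c.edges.image Prod.snd) (c.peb w) + if w = v then k else 0) :=
        Finset.sum_le_sum fun w _ => h w
    _ = potential c + k := by rw [Finset.sum_add_distrib, Finset.sum_ite_eq']; simp [potential]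

theorem potential_update_le {E : Finset (V × V)} {p : V → Option Pebble} {v : V}
    {x : Option Pebble} {k : ℕ}
    (h : pebbleDebt (v ∈ E.image Prod.fst) (v ∈ E.image Prod.snd) (p v) ≤
      pebbleDebt (v ∈ E.image Prod.fst) (v ∈ E.image Prod.snd) x + k) :
    potential ⟨E, p⟩ ≤ potential ⟨E, Function.update p v x⟩ + k := by
  refine potential_le_of_forall_le v k fun w => ?_
  by_cases hw : w = v
  · subst hw
    simpa using h
  · simp [hw]

/-- A computation is free and moves no debt: the leaf `u` keeps its pebble, and `v` owes one
store before and after. -/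
theorem potential_compute_le {E : Finset (V × V)} {p : V → Option Pebble} {u v : V}
    (he : (u, v) ∈ E) (hleaf : ∀ x, (x, u) ∉ E) (hu : (p u).isSome) (hv : (p v).isSome) :
    potential ⟨E, p⟩ ≤ potential ⟨E.erase (u, v), Function.update p v (some Pebble.blue)⟩ := by
  have huv : u ≠ v := by rintro rfl; exact hleaf u he
  refine (potential_le_of_forall_le v 0 fun w => ?_).trans_eq (add_zero _)
  by_cases hwv : w = v
  · subst hwv
    obtain ⟨q, hq⟩ := Option.isSome_iff_exists.1 hv
    have hin : w ∈ E.image Prod.snd := Finset.mem_image.2 ⟨_, he, rfl⟩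
    cases q <;> simp [hq, hin, pebbleDebt]
  by_cases hwu : w = u
  · subst hwu
    obtain ⟨q, hq⟩ := Option.isSome_iff_exists.1 hu
    have hin : w ∉ E.image Prod.snd := by simpa using hleaf
    have hin' : w ∉ (E.erase (w, v)).image Prod.snd := by simpa using fun x _ => hleaf x
    cases q <;> simp [hq, hin, hin', hwv, pebbleDebt]
  · simp [hwu, hwv]

theorem Step.potential_le {M : ℕ} {b c : Config V} {k : ℕ}
    (hdisj : Disjoint (b.edges.image Prod.fst) (b.edges.image Prod.snd)) (s : Step M b c k) :
    potential b ≤ potential c + k := by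
  cases s with
  | load v h =>
    have hnot : (decide (v ∈ b.edges.image Prod.fst) && decide (v ∈ b.edges.image Prod.snd))
        = false := by
      simpa using @Finset.disjoint_left.1 hdisj v
    refine potential_update_le ?_
    rw [h]
    exact (by decide : ∀ o i : Bool, (o && i) = false →
      pebbleDebt o i none ≤ pebbleDebt o i (some .red) + 1) _ _ hnot
  | remove v h =>
    refine potential_update_le ?_
    rw [h]
    exact (by decide : ∀ o i : Bool, pebbleDebt o i (some .red) ≤ pebbleDebt o i none + 0) _ _
  | toBlue v h =>
    refine potential_update_le ?_
    rw [h]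
    exact (by decide : ∀ o i : Bool,
      pebbleDebt o i (some .red) ≤ pebbleDebt o i (some .blue) + 0) _ _
  | store v h =>
    refine potential_update_le ?_
    rw [h]
    exact (by decide : ∀ o i : Bool,
      pebbleDebt o i (some .blue) ≤ pebbleDebt o i (some .red) + 1) _ _
  | compute u v he hleaf hu hv => exact potential_compute_le he hleaf hu hv

theorem Reach.potential_le {M : ℕ} {a c : Config V} {k : ℕ}
    (hdisj : Disjoint (a.edges.image Prod.fst) (a.edges.image Prod.snd)) (r : Reach M a c k) :
    potential a ≤ potential c + k := by
  induction r with
  | refl => exact le_rfl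
  | tail r s ih =>
    have hsub := Finset.image_subset_image (f := Prod.fst) r.edges_subset
    have hsub' := Finset.image_subset_image (f := Prod.snd) r.edges_subset
    have := s.potential_le (hdisj.mono hsub hsub')
    omega

theorem potential_eq_zero {c : Config V} (he : c.edges = ∅)
    (hb : ∀ v, c.peb v ≠ some Pebble.blue) : potential c = 0 := by
  refine Finset.sum_eq_zero fun v _ => ?_
  have := hb v
  rcases hp : c.peb v with _ | _ | _ <;> simp_all [pebbleDebt]

theorem potential_empty_cache (E : Finset (V × V)) :
    potential (⟨E, fun _ => none⟩ : Config V) =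
      (E.image Prod.fst).card + 2 * (E.image Prod.snd).card := by
  simp only [potential, pebbleDebt, decide_eq_true_eq, Finset.sum_add_distrib,
    Finset.sum_ite_mem, Finset.univ_inter, Finset.sum_const, smul_eq_mul, mul_comm]
  simp

theorem le_of_mem_achievable {M k : ℕ} {E : Finset (V × V)}
    (hdisj : Disjoint (E.image Prod.fst) (E.image Prod.snd)) (hk : k ∈ Achievable M E) :
    (E.image Prod.fst).card + 2 * (E.image Prod.snd).card ≤ k := by
  obtain ⟨c, r, he, hb⟩ := hk
  have := r.potential_le hdisj
  rwa [potential_eq_zero he hb, potential_empty_cache, zero_add] at this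

def onlyPebble (t : V) (p : Pebble) : V → Option Pebble :=
  Function.update (fun _ => none) t (some p)

theorem pebCount_onlyPebble (E : Finset (V × V)) (t : V) (p : Pebble) :
    pebCount (⟨E, onlyPebble t p⟩ : Config V) = 1 := by
  have : Finset.univ.filter (fun v => (onlyPebble t p v).isSome) = {t} := by
    ext v
    by_cases hv : v = t <;> simp [onlyPebble, Function.update_apply, hv]
  rw [pebCount, this, Finset.card_singleton]

theorem Finset.erase_sdiff_erase_product {α β : Type*} [DecidableEq α] [DecidableEq β]
    (E : Finset (α × β)) {S : Finset α} {s : α} (t : β) (hs : s ∈ S) :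
    E.erase (s, t) \ (S.erase s) ×ˢ {t} = E \ S ×ˢ {t} := by
  ext ⟨x, y⟩
  simp only [Finset.mem_sdiff, Finset.mem_erase, Finset.mem_product, Finset.mem_singleton,
    ne_eq, Prod.mk.injEq]
  by_cases hx : x = s
  · subst hx
    tauto
  · tauto

section Strategy

variable {E : Finset (V × V)} {s t : V}

theorem reach_erase_source (p : Pebble) (he : (s, t) ∈ E) (hleaf : ∀ x, (x, s) ∉ E) :
    Reach 2 ⟨E, onlyPebble t p⟩ ⟨E.erase (s, t), onlyPebble t Pebble.blue⟩ 1 := by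
  have hst : s ≠ t := by rintro rfl; exact hleaf s he
  refine (((Reach.single (Step.load _ s (by simp [onlyPebble, hst])
    (by rw [pebCount_onlyPebble]; omega))).tail (Step.compute _ s t he hleaf
      (by simp) (by simp [onlyPebble, hst.symm]))).tail
        (Step.remove _ s (by simp [hst]))).congr ?_ rfl
  congr 1
  funext v
  simp only [onlyPebble, Function.update_apply]
  split_ifs <;> simp_all

theorem reach_sdiff_sources (S : Finset V) (hSE : S ×ˢ {t} ⊆ E)
    (hleaf : ∀ x ∈ S, ∀ y, (y, x) ∉ E) :
    Reach 2 ⟨E, onlyPebble t Pebble.blue⟩ ⟨E \ S ×ˢ {t}, onlyPebble t Pebble.blue⟩ S.card := by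
  induction S using Finset.induction generalizing E with
  | empty => simpa using Reach.refl _
  | insert s S hs ih =>
    have he : (s, t) ∈ E := hSE (by simp)
    have hS : S ×ˢ {t} ⊆ E.erase (s, t) := fun x hx =>
      Finset.mem_erase.2 ⟨by rintro rfl; simp_all, hSE (Finset.product_subset_product_left
        (Finset.subset_insert s S) hx)⟩
    have hleaf' : ∀ s' ∈ S, ∀ x, (x, s') ∉ E.erase (s, t) := fun s' hs' x hx =>
      hleaf s' (Finset.mem_insert_of_mem hs') x (Finset.mem_of_mem_erase hx)
    refine ((reach_erase_source _ he (hleaf s (by simp))).trans (ih hS hleaf')).congr ?_ ?_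
    · rw [← E.erase_sdiff_erase_product t (Finset.mem_insert_self s S), Finset.erase_insert hs]
    · rw [Finset.card_insert_of_notMem hs, add_comm]

theorem reach_first_gadget {S : Finset V} (hs : s ∈ S) (hSE : S ×ˢ {t} ⊆ E)
    (hleaf : ∀ x ∈ S, ∀ y, (y, x) ∉ E) :
    Reach 2 ⟨E, fun _ => none⟩ ⟨E \ S ×ˢ {t}, onlyPebble s Pebble.red⟩ (S.card + 2) := by
  have he : (s, t) ∈ E := hSE (by simp [hs])
  have hst : s ≠ t := by rintro rfl; exact hleaf s hs s he
  have hblue : Reach 2 ⟨E, fun _ => none⟩ ⟨E, onlyPebble t Pebble.blue⟩ 1 :=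
    ((Reach.single (Step.load _ t rfl (by simp [pebCount]))).tail
      (Step.toBlue _ t (by simp))).congr (by simp [onlyPebble]) rfl
  have hloop := reach_sdiff_sources (S.erase s)
    ((Finset.product_subset_product_left (S.erase_subset s)).trans hSE)
    (fun x hx => hleaf x (Finset.mem_of_mem_erase hx))
  have hkeep : Reach 2 ⟨E \ (S.erase s) ×ˢ {t}, onlyPebble t Pebble.blue⟩
      ⟨E \ S ×ˢ {t}, onlyPebble s Pebble.red⟩ 2 := by
    refine ((((Reach.single (Step.load _ s (by simp [onlyPebble, hst])
      (by rw [pebCount_onlyPebble]; omega))).tail (Step.compute _ s t (by simp [he])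
        (fun x hx => hleaf s hs x (Finset.mem_sdiff.1 hx).1) (by simp)
        (by simp [onlyPebble, hst.symm]))).tail (Step.store _ t (by simp))).tail
          (Step.remove _ t (by simp))).congr ?_ rfl
    congr 1
    · rw [← Finset.erase_sdiff_comm, E.erase_sdiff_erase_product t hs]
    · funext v
      simp only [onlyPebble, Function.update_apply]
      split_ifs <;> simp_all
  refine ((hblue.trans hloop).trans hkeep).congr rfl ?_
  have := Finset.card_pos.2 ⟨s, hs⟩
  rw [Finset.card_erase_of_mem hs]
  omega

theorem reach_second_gadget {S : Finset V} (hs : s ∈ S) (hSE : S ×ˢ {t} ⊆ E)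
    (hleaf : ∀ x ∈ S, ∀ y, (y, x) ∉ E) :
    Reach 2 ⟨E, onlyPebble s Pebble.red⟩ ⟨E \ S ×ˢ {t}, onlyPebble t Pebble.red⟩
      (S.card + 1) := by
  have he : (s, t) ∈ E := hSE (by simp [hs])
  have hst : s ≠ t := by rintro rfl; exact hleaf s hs s he
  have hswap : Reach 2 ⟨E, onlyPebble s Pebble.red⟩
      ⟨E.erase (s, t), onlyPebble t Pebble.blue⟩ 1 := by
    refine (((Reach.single (Step.load _ t (by simp [onlyPebble, hst.symm])
      (by rw [pebCount_onlyPebble]; omega))).tail (Step.compute _ s t he (hleaf s hs)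
        (by simp [onlyPebble, hst]) (by simp))).tail
          (Step.remove _ s (by simp [onlyPebble, hst]))).congr ?_ rfl
    congr 1
    funext v
    simp only [onlyPebble, Function.update_apply]
    split_ifs <;> simp_all
  have hloop := reach_sdiff_sources (E := E.erase (s, t)) (S.erase s)
    (fun p hp => by
      obtain ⟨hx, hy⟩ := Finset.mem_product.1 hp
      exact Finset.mem_erase.2 ⟨by rintro rfl; simp at hx,
        hSE (Finset.mem_product.2 ⟨Finset.mem_of_mem_erase hx, hy⟩)⟩)
    (fun x hx y hy => hleaf x (Finset.mem_of_mem_erase hx) y (Finset.mem_of_mem_erase hy))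
  refine ((hswap.trans hloop).tail (Step.store _ t (by simp [onlyPebble]))).congr ?_ ?_
  · congr 1
    · exact E.erase_sdiff_erase_product t hs
    · simp [onlyPebble]
  · have := Finset.card_pos.2 ⟨s, hs⟩
    rw [Finset.card_erase_of_mem hs]
    omega

end Strategy

section Gadget

variable {n : ℕ} (G : SimpleGraph (Fin n)) [DecidableRel G.Adj]

theorem src_injective (i : Fin n) : Function.Injective (src G i) := by
  intro a b h
  unfold src at h
  split_ifs at h <;> simp only [Prod.mk.injEq] at h <;> omega

theorem src_comm {i j : Fin n} (ha : G.Adj i j) : src G j i = src G i j := by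
  unfold src
  rcases lt_trichotomy i j with h | h | h
  · rw [if_pos ⟨G.adj_symm ha, h⟩, if_neg fun hc => lt_asymm h hc.2]
  · exact absurd h (G.ne_of_adj ha)
  · rw [if_neg fun hc => lt_asymm h hc.2, if_pos ⟨ha, h⟩]

theorem src_ne_src {i j : Fin n} (hna : ¬ G.Adj i j) (hij : i ≠ j) (a b : Fin n) :
    src G i a ≠ src G j b := by
  intro h
  unfold src at h
  split_ifs at h with h₁ h₂ h₂ <;> simp only [Prod.mk.injEq] at h
  · exact hij h.2
  · obtain ⟨rfl, rfl⟩ := h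
    exact hna h₁.1
  · obtain ⟨rfl, rfl⟩ := h
    exact hna (G.adj_symm h₂.1)
  · exact hij h.1

def gadgetSources (i : Fin n) : Finset (Fin n ⊕ Fin n × Fin n) :=
  Finset.univ.image fun k => Sum.inr (src G i k)

theorem card_gadgetSources (i : Fin n) : (gadgetSources G i).card = n := by
  rw [gadgetSources, Finset.card_image_of_injective _
    fun a b h => src_injective G i (Sum.inr_injective h),
    Finset.card_univ, Fintype.card_fin]

theorem twoGadgetEdges_eq (i j : Fin n) :
    twoGadgetEdges G i j =
      gadgetSources G i ×ˢ {Sum.inl i} ∪ gadgetSources G j ×ˢ {Sum.inl j} := by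
  ext ⟨x, y⟩
  simp only [twoGadgetEdges, gadgetSources, Finset.mem_image, Finset.mem_filter,
    Finset.mem_univ, true_and, Finset.mem_union, Finset.mem_product, Finset.mem_singleton,
    Prod.exists, Prod.mk.injEq]
  constructor
  · rintro ⟨a, b, rfl | rfl, rfl, rfl⟩
    · exact Or.inl ⟨⟨b, rfl⟩, rfl⟩
    · exact Or.inr ⟨⟨b, rfl⟩, rfl⟩
  · rintro (⟨⟨b, rfl⟩, rfl⟩ | ⟨⟨b, rfl⟩, rfl⟩)
    · exact ⟨i, b, Or.inl rfl, rfl, rfl⟩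
    · exact ⟨j, b, Or.inr rfl, rfl, rfl⟩

theorem gadgetSources_leaf {i j k : Fin n} :
    ∀ s ∈ gadgetSources G k, ∀ x, (x, s) ∉ twoGadgetEdges G i j := by
  intro s hs x hx
  obtain ⟨k, -, rfl⟩ := Finset.mem_image.1 hs
  simp [twoGadgetEdges_eq] at hx

theorem src_mem_gadgetSources (i k : Fin n) : Sum.inr (src G i k) ∈ gadgetSources G i :=
  Finset.mem_image_of_mem _ (Finset.mem_univ k)

theorem disjoint_image_fst_snd_twoGadgetEdges (i j : Fin n) :
    Disjoint ((twoGadgetEdges G i j).image Prod.fst) ((twoGadgetEdges G i j).image Prod.snd) := by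
  refine Finset.disjoint_left.2 fun s hfst hsnd => ?_
  obtain ⟨⟨x, y⟩, hxy, rfl⟩ := Finset.mem_image.1 hsnd
  obtain ⟨⟨_, _⟩, hy, rfl⟩ := Finset.mem_image.1 hfst
  rw [twoGadgetEdges_eq, Finset.mem_union, Finset.mem_product, Finset.mem_product] at hy
  rcases hy with ⟨hy, -⟩ | ⟨hy, -⟩
  exacts [gadgetSources_leaf G _ hy x hxy, gadgetSources_leaf G _ hy x hxy]

theorem le_of_mem_achievable_twoGadgetEdges {M k : ℕ} {i j : Fin n} (hna : ¬ G.Adj i j)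
    (hij : i ≠ j) (hk : k ∈ Achievable M (twoGadgetEdges G i j)) : 2 * n + 4 ≤ k := by
  have hfst : (twoGadgetEdges G i j).image Prod.fst = gadgetSources G i ∪ gadgetSources G j := by
    rw [twoGadgetEdges_eq, Finset.image_union, Finset.product_image_fst (by simp),
      Finset.product_image_fst (by simp)]
  have hsnd : (twoGadgetEdges G i j).image Prod.snd = {Sum.inl i, Sum.inl j} := by
    rw [twoGadgetEdges_eq, Finset.image_union, Finset.product_image_snd ⟨_, src_mem_gadgetSources G i i⟩,
      Finset.product_image_snd ⟨_, src_mem_gadgetSources G j j⟩]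
    rfl
  have hdisj : Disjoint (gadgetSources G i) (gadgetSources G j) := by
    refine Finset.disjoint_left.2 fun s hi hj => ?_
    obtain ⟨a, -, rfl⟩ := Finset.mem_image.1 hi
    obtain ⟨b, -, hb⟩ := Finset.mem_image.1 hj
    exact src_ne_src G hna hij a b (Sum.inr_injective hb).symm
  have := le_of_mem_achievable (disjoint_image_fst_snd_twoGadgetEdges G i j) hk
  rw [hfst, hsnd, Finset.card_union_of_disjoint hdisj, card_gadgetSources, card_gadgetSources,
    Finset.card_pair (by simpa using hij)] at this
  omega

theorem mem_achievable_twoGadgetEdges_of_adj {i j : Fin n} (ha : G.Adj i j) :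
    2 * n + 3 ∈ Achievable 2 (twoGadgetEdges G i j) := by
  have hsj : Sum.inr (src G i j) ∈ gadgetSources G j := src_comm G ha ▸ src_mem_gadgetSources G j i
  have hfirst := reach_first_gadget (t := Sum.inl i) (src_mem_gadgetSources G i j)
    (twoGadgetEdges_eq G i j ▸ Finset.subset_union_left) (gadgetSources_leaf G)
  have hsecond := reach_second_gadget
    (E := twoGadgetEdges G i j \ gadgetSources G i ×ˢ {Sum.inl i}) (t := Sum.inl j) hsj
    (Finset.subset_sdiff.2 ⟨twoGadgetEdges_eq G i j ▸ Finset.subset_union_right,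
      Finset.disjoint_product.2 (Or.inr (by simpa using (G.ne_of_adj ha).symm))⟩)
    (fun s hs x hx => gadgetSources_leaf G s hs x (Finset.mem_sdiff.1 hx).1)
  refine ⟨_, (hfirst.trans hsecond).congr rfl ?_, ?_, fun v => ?_⟩
  · rw [card_gadgetSources, card_gadgetSources]
    ring
  · exact (sdiff_sdiff_left ..).trans (twoGadgetEdges_eq G i j ▸ Finset.sdiff_self _)
  · by_cases hv : v = Sum.inl j <;> simp [onlyPebble, hv]

end Gadget

theorem stmt12_general (n : ℕ) (G : SimpleGraph (Fin n)) [DecidableRel G.Adj]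
    (i j : Fin n) (hij : i ≠ j) :
    (G.Adj i j ↔ (2 * n + 3) ∈ Achievable 2 (twoGadgetEdges G i j)) ∧
    (¬ G.Adj i j → ∀ k ∈ Achievable 2 (twoGadgetEdges G i j), 2 * n + 4 ≤ k) := by
  have hlower : ¬ G.Adj i j → ∀ k ∈ Achievable 2 (twoGadgetEdges G i j), 2 * n + 4 ≤ k :=
    fun hna _ hk => le_of_mem_achievable_twoGadgetEdges G hna hij hk
  refine ⟨⟨mem_achievable_twoGadgetEdges_of_adj G, fun h => ?_⟩, hlower⟩
  by_contra hna
  have := hlower hna _ h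
  omega

/-- in the `(2,1)`-I/O model with partial computations, the two gadgets
`g_i` and `g_j` (`i ≠ j`) can both be fully eliminated (all their `2n` edges deleted and
both results stored) at a total cost of `2n + 3` iff `(v_i, v_j)` is an edge of `G`;
otherwise every such strategy costs at least `2n + 4`. -/
theorem stmt12 (n : ℕ) (hn : 1 ≤ n) (G : SimpleGraph (Fin n)) [DecidableRel G.Adj]
    (i j : Fin n) (hij : i ≠ j) :
    (G.Adj i j ↔ (2 * n + 3) ∈ Achievable 2 (twoGadgetEdges G i j)) ∧
    (¬ G.Adj i j → ∀ k ∈ Achievable 2 (twoGadgetEdges G i j), 2 * n + 4 ≤ k) :=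
  stmt12_general n G i j hij
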